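/- Let G be a directed graph with n vertices in which every vertex u satisfies max(outdeg(u), indeg(u)) ≤ 2 and outdeg(u) + indeg(u) ≤ 3, fix a vertex x of G, and let G' be the graph of the directed trail construction. Then G has a directed Hamiltonian cycle if and only if G' admits n + 1 s-t trails sharing no arc. -/

import Mathlib

namespace PaperRCA

/-- A walk in a directed graph with arc relation `A`: a nonempty list of vertices
in which each consecutive pair is an arc. -/
def IsDiWalk {V : Type*} (A : V → V → Prop) (w : List V) : Prop :=
  w ≠ [] ∧ w.Chain' A

/-- The list of arcs of a walk. -/
def walkArcs {V : Type*} (w : List V) : List (V × V) := w.zip w.tail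

/-- An arc `a` is shared by the family of walks `W` if it occurs at the same
position in two distinct walks of the family. -/
def SharedArc {V : Type*} {p : ℕ} (W : Fin p → List V) (a : V × V) : Prop :=
  ∃ i j : Fin p, i ≠ j ∧ ∃ r : ℕ,
    (walkArcs (W i))[r]? = some a ∧ (walkArcs (W j))[r]? = some a

/-- A directed Hamiltonian cycle in a digraph on `Fin n` with arc relation `A`:
a closed walk on `n + 1` vertices (first = last) visiting every vertex exactly
once. -/
def HasDiHamCycle {n : ℕ} (A : Fin n → Fin n → Prop) : Prop :=
  ∃ l : List (Fin n), l.Chain' A ∧ l.head? = l.getLast? ∧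
    l.length = n + 1 ∧ l.tail.Nodup

/-- Vertices of the directed trail construction for a digraph `G` on `n` vertices:
a copy of the original vertices, new vertices `s, t, v, w`, and the internal
vertices `ch c r` of the `n` directed chains from `s` to `w` of lengths
`3, 4, …, n+2` (chain `c : Fin n` has length `c + 3`, hence `c + 2` internal
vertices). -/
inductive DTV (n : ℕ) where
  | orig (x : Fin n) : DTV n
  | s : DTV n
  | t : DTV n
  | v : DTV n
  | w : DTV n
  | ch (c : Fin n) (r : Fin ((c : ℕ) + 2)) : DTV n

/-- Arc relation of the directed trail construction; `x₀` is the chosen vertex of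
`G`. -/
def DTArc {n : ℕ} (A : Fin n → Fin n → Prop) (x₀ : Fin n) :
    DTV n → DTV n → Prop
  | .orig a, .orig b => A a b
  | .s, .v => True
  | .v, .orig a => a = x₀
  | .orig a, .w => a = x₀
  | .w, .t => True
  | .s, .ch _ r => (r : ℕ) = 0
  | .ch c r, .ch c' r' => (c : ℕ) = (c' : ℕ) ∧ (r' : ℕ) = (r : ℕ) + 1
  | .ch c r, .w => (r : ℕ) + 1 = (c : ℕ) + 2
  | _, _ => False

/-!
Forward: rotate the Hamiltonian cycle so that it starts at `x₀`. The trails are the `n` chain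
trails `s → ⋯ → w → t`, with `4, …, n + 3` arcs, and `s → v → x₀ → ⋯ → x₀ → w → t` along the
cycle, with `n + 4` arcs. Two of them meet only in `s`, `w`, `t`, so the only arc they could
share is `(w, t)`; but that is the last arc of each, and the lengths differ.

Backward: the `n + 1` trails leave `s` along distinct arcs, so by pigeonhole one of them enters
`v` and one enters each chain. The chain trails have `4, …, n + 3` arcs, and the common last arc
`(w, t)` forces the lengths to be distinct, so the trail through `v` runs along a closed trail of
`G` at `x₀` with at least `n` arcs. A vertex repeated on a closed trail has two in-arcs and two
out-arcs on it, which `indeg + outdeg ≤ 3` forbids; so this closed trail is a Hamiltonian cycle.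
-/

section Walks

variable {V : Type*} {R : V → V → Prop}

@[simp]
lemma walkArcs_nil : walkArcs ([] : List V) = [] := rfl

@[simp]
lemma walkArcs_singleton (a : V) : walkArcs [a] = [] := rfl

@[simp]
lemma walkArcs_cons_cons (a b : V) (l : List V) :
    walkArcs (a :: b :: l) = (a, b) :: walkArcs (b :: l) := rfl

lemma map_snd_walkArcs (l : List V) : (walkArcs l).map Prod.snd = l.tail :=
  List.map_snd_zip (by simp)

lemma map_fst_walkArcs (l : List V) : (walkArcs l).map Prod.fst = l.dropLast := by
  induction l with
  | nil => rfl
  | cons a l ih => cases l with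
    | nil => rfl
    | cons b l => simp [ih]

lemma walkArcs_map {W : Type*} (f : V → W) (l : List V) :
    walkArcs (l.map f) = (walkArcs l).map (Prod.map f f) := by
  simp [walkArcs, ← List.map_tail, List.zip_map]

lemma mem_of_mem_walkArcs {l : List V} {a b : V} (h : (a, b) ∈ walkArcs l) :
    a ∈ l ∧ b ∈ l :=
  ⟨(List.of_mem_zip h).1, List.mem_of_mem_tail (List.of_mem_zip h).2⟩

lemma rel_of_mem_walkArcs {l : List V} (hl : l.IsChain R) {a b : V}
    (h : (a, b) ∈ walkArcs l) : R a b := by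
  induction l with
  | nil => simp at h
  | cons x l ih => cases l with
    | nil => simp at h
    | cons y l =>
      rw [List.isChain_cons_cons] at hl
      rw [walkArcs_cons_cons, List.mem_cons, Prod.mk.injEq] at h
      rcases h with ⟨rfl, rfl⟩ | h
      exacts [hl.1, ih hl.2 h]

lemma nodup_walkArcs_of_nodup_tail {l : List V} (h : l.tail.Nodup) : (walkArcs l).Nodup :=
  List.Nodup.of_map Prod.snd (map_snd_walkArcs l ▸ h)

lemma nodup_walkArcs_cons {a : V} {l : List V} (ha : a ∉ l) (hl : (walkArcs l).Nodup) :
    (walkArcs (a :: l)).Nodup := by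
  cases l with
  | nil => simp
  | cons b l =>
    exact List.nodup_cons.2 ⟨fun h => ha (mem_of_mem_walkArcs h).1, hl⟩

lemma walkArcs_prefix_append (l m : List V) : walkArcs l <+: walkArcs (l ++ m) := by
  induction l with
  | nil => exact List.nil_prefix
  | cons a l ih => cases l with
    | nil => exact List.nil_prefix
    | cons b l => simpa using ih

lemma walkArcs_suffix_append (l m : List V) : walkArcs m <:+ walkArcs (l ++ m) := by
  induction l with
  | nil => exact List.suffix_refl _
  | cons a l ih =>
    rcases hlm : l ++ m with _ | ⟨b, k⟩
    · simp_all
    · rw [hlm] at ih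
      rw [List.cons_append, hlm, walkArcs_cons_cons]
      exact ih.trans (List.suffix_cons _ _)

lemma walkArcs_infix_append (l m k : List V) : walkArcs m <:+: walkArcs (l ++ m ++ k) :=
  List.IsInfix.trans (walkArcs_prefix_append m k).isInfix
    (by rw [List.append_assoc]; exact (walkArcs_suffix_append l (m ++ k)).isInfix)

lemma getElem?_walkArcs_eq_some {l : List V} {r : ℕ} {a b : V} :
    (walkArcs l)[r]? = some (a, b) ↔ l[r]? = some a ∧ l[r + 1]? = some b := by
  simp [walkArcs, List.getElem?_zip_eq_some]

lemma getElem?_walkArcs_append_pair (p : List V) (a b : V) :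
    (walkArcs (p ++ [a, b]))[p.length]? = some (a, b) := by
  simp [walkArcs]

lemma exists_eq_cons_cons_of_head?_of_getLast? {l : List V} {a b : V} (ha : l.head? = some a)
    (hb : l.getLast? = some b) (hab : a ≠ b) : ∃ y l', l = a :: y :: l' := by
  rcases l with _ | ⟨x, _ | ⟨y, l'⟩⟩
  · simp at ha
  · simp_all
  · exact ⟨y, l', by simp_all⟩

lemma succ_eq_length_of_getElem?_eq_sink {l : List V} (hl : l.IsChain R) {x : V}
    (hx : ∀ y, ¬ R x y) {k : ℕ} (hk : l[k]? = some x) : k + 1 = l.length := by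
  obtain ⟨hlt, rfl⟩ := List.getElem?_eq_some_iff.1 hk
  by_contra hne
  exact hx _ (List.isChain_iff_getElem.1 hl k (by omega))

end Walks

section ClosedTrails

variable {V : Type*} {R : V → V → Prop}

lemma count_map_snd_le_ncard [Finite V] [DecidableEq V] {E : List (V × V)} (hE : E.Nodup)
    (hR : ∀ e ∈ E, R e.1 e.2) (u : V) : (E.map Prod.snd).count u ≤ {z | R z u}.ncard := by
  set F := E.filter (fun e => e.2 == u)
  have hF : (F.map Prod.fst).Nodup :=
    (hE.filter _).map_on fun x hx y hy h => by
      simp only [F, List.mem_filter, beq_iff_eq] at hx hy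
      exact Prod.ext h (hx.2.trans hy.2.symm)
  calc (E.map Prod.snd).count u = (F.map Prod.fst).length := by
        rw [List.count_eq_countP, List.countP_map, List.countP_eq_length_filter, List.length_map]
        rfl
    _ = ((F.map Prod.fst).toFinset : Set V).ncard := by
        rw [Set.ncard_coe_finset, List.toFinset_card_of_nodup hF]
    _ ≤ {z | R z u}.ncard := Set.ncard_le_ncard (fun z hz => by
        simp only [F, List.coe_toFinset, List.mem_map, List.mem_filter, beq_iff_eq,
          Set.mem_ofPred_eq] at hz
        obtain ⟨e, ⟨he, rfl⟩, rfl⟩ := hz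
        exact hR e he) (Set.toFinite _)

lemma count_map_fst_le_ncard [Finite V] [DecidableEq V] {E : List (V × V)} (hE : E.Nodup)
    (hR : ∀ e ∈ E, R e.1 e.2) (u : V) : (E.map Prod.fst).count u ≤ {z | R u z}.ncard := by
  have h := count_map_snd_le_ncard (R := flip R) (hE.map Prod.swap_injective)
    (fun _ he => by obtain ⟨e, heE, rfl⟩ := List.mem_map.1 he; exact hR e heE) u
  rwa [List.map_map] at h

lemma tail_perm_dropLast_of_head?_eq_getLast? {l : List V} (h : l.head? = l.getLast?) :
    l.tail.Perm l.dropLast := by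
  rcases l with _ | ⟨a, T⟩
  · rfl
  rcases T.eq_nil_or_concat' with rfl | ⟨T', b, rfl⟩
  · rfl
  obtain rfl : a = b := by
    rw [← List.cons_append, List.getLast?_concat] at h
    simpa using h
  show (T' ++ [a]).Perm ((a :: T') ++ [a]).dropLast
  rw [List.dropLast_concat]
  exact List.perm_append_singleton a T'

lemma nodup_tail_of_closed_trail [Finite V]
    (hdeg : ∀ u, {z | R u z}.ncard + {z | R z u}.ncard ≤ 3) {l : List V} (hl : l.IsChain R)
    (hclosed : l.head? = l.getLast?) (htrail : (walkArcs l).Nodup) : l.tail.Nodup := by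
  classical
  have hR : ∀ e ∈ walkArcs l, R e.1 e.2 := fun e he => rel_of_mem_walkArcs hl he
  refine List.nodup_iff_count_le_one.2 fun u => ?_
  have hin := count_map_snd_le_ncard htrail hR u
  have hout := count_map_fst_le_ncard htrail hR u
  rw [map_snd_walkArcs] at hin
  rw [map_fst_walkArcs, ← (tail_perm_dropLast_of_head?_eq_getLast? hclosed).count_eq] at hout
  have := hdeg u
  omega

lemma exists_rotation_of_closed_walk {l : List V} (hl : l.IsChain R)
    (hclosed : l.head? = l.getLast?) {x : V} (hx : x ∈ l.tail) :
    ∃ C : List V, C.IsChain R ∧ C.head? = some x ∧ C.getLast? = some x ∧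
      C.length = l.length ∧ C.tail.Perm l.tail := by
  rcases l with _ | ⟨a, T⟩
  · simp at hx
  rcases T.eq_nil_or_concat' with rfl | ⟨T', b, rfl⟩
  · simp at hx
  obtain rfl : a = b := by
    rw [← List.cons_append, List.getLast?_concat] at hclosed
    simpa using hclosed
  have hperm : (T' ++ [a]).Perm (a :: T') := List.perm_append_singleton a T'
  obtain ⟨p, q, hpq⟩ := List.append_of_mem (hperm.subset hx)
  have hcyc : Cycle.Chain R (x :: (q ++ p) : List V) := by
    have hrot : ((a :: T' : List V) : Cycle V) = (x :: (q ++ p) : List V) := by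
      rw [hpq, Cycle.coe_eq_coe]
      exact List.isRotated_append
    rw [← hrot, Cycle.chain_coe_cons]
    simpa using hl
  refine ⟨x :: (q ++ p ++ [x]), ?_, rfl, List.getLast?_eq_some_iff.2 ⟨x :: (q ++ p), rfl⟩, ?_, ?_⟩
  · simpa using (Cycle.chain_coe_cons R x (q ++ p)).1 hcyc
  · have := congrArg List.length hpq
    simp only [List.length_cons, List.length_append] at this ⊢
    omega
  · calc List.Perm (q ++ p ++ [x]) (x :: (q ++ p)) := List.perm_append_singleton x _
      List.Perm _ (p ++ x :: q) := List.perm_append_comm (l₁ := x :: q)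
      _ = a :: T' := hpq.symm
      List.Perm _ (T' ++ [a]) := hperm.symm

end ClosedTrails

section Construction

variable {n : ℕ} {A : Fin n → Fin n → Prop} {x₀ : Fin n}

def chainTrail (c : Fin n) : List (DTV n) :=
  DTV.s :: List.ofFn (DTV.ch c) ++ [DTV.w, DTV.t]

def mainTrail (C : List (Fin n)) : List (DTV n) :=
  DTV.s :: DTV.v :: C.map DTV.orig ++ [DTV.w, DTV.t]

def trailFamily (C : List (Fin n)) : Fin (n + 1) → List (DTV n) :=
  Fin.lastCases (mainTrail C) chainTrail

/-- `lane x = some i` when `x` lies on the `i`-th trail of `trailFamily` only; `s`, `w`, `t` lie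
on all of them. -/
def lane : DTV n → Option (Fin (n + 1))
  | .orig _ | .v => some (Fin.last n)
  | .ch c _ => some c.castSucc
  | _ => none

lemma not_dtArc_t (b : DTV n) : ¬ DTArc A x₀ .t b := by
  cases b <;> simp [DTArc]

lemma dtArc_s_iff {z : DTV n} :
    DTArc A x₀ .s z ↔ z = .v ∨ ∃ c : Fin n, z = .ch c ⟨0, by omega⟩ := by
  cases z with
  | ch c r =>
    refine ⟨fun h => Or.inr ⟨c, by rw [show r = ⟨0, by omega⟩ from Fin.ext h]⟩, ?_⟩
    rintro (h | ⟨_, h⟩) <;> cases h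
    rfl
  | _ => simp [DTArc]

lemma eq_t_of_dtArc_of_lane_eq_none {a b : DTV n} (h : DTArc A x₀ a b) (ha : lane a = none)
    (hb : lane b = none) : b = .t := by
  cases a <;> cases b <;> simp_all [DTArc, lane]

lemma isChain_chainTrail (c : Fin n) : (chainTrail c).IsChain (DTArc A x₀) := by
  rw [chainTrail, List.isChain_append, List.isChain_cons]
  refine ⟨⟨fun y hy => ?_, List.isChain_ofFn.2 fun i hi => ⟨rfl, rfl⟩⟩, by simp [DTArc], ?_⟩
  · rw [List.ofFn_succ] at hy
    obtain rfl := Option.some_injective _ hy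
    rfl
  · intro x hx y hy
    rw [List.ofFn_succ_last, ← List.cons_append, List.getLast?_concat] at hx
    obtain rfl := Option.some_injective _ hx
    obtain rfl := Option.some_injective _ hy
    show (c : ℕ) + 1 + 1 = c + 2
    rfl

lemma nodup_chainTrail (c : Fin n) : (chainTrail c).Nodup := by
  simp [chainTrail, -List.ofFn_succ, List.nodup_append, List.nodup_ofFn, List.mem_ofFn,
    Function.Injective]

lemma length_chainTrail (c : Fin n) : (chainTrail c).length = c + 5 := by
  simp [chainTrail]

lemma isChain_mainTrail {C : List (Fin n)} (hC : C.IsChain A) (hhead : C.head? = some x₀)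
    (hlast : C.getLast? = some x₀) : (mainTrail C).IsChain (DTArc A x₀) := by
  rw [mainTrail, List.isChain_append, List.isChain_cons_cons, List.isChain_cons, List.head?_map,
    hhead, List.isChain_map]
  refine ⟨⟨trivial, by simp [DTArc], hC⟩, by simp [DTArc], ?_⟩
  obtain ⟨C', rfl⟩ := List.getLast?_eq_some_iff.1 hlast
  intro x hx y hy
  simp only [List.map_append, List.map_singleton, ← List.cons_append, List.getLast?_concat] at hx
  obtain rfl := Option.some_injective _ hx
  obtain rfl := Option.some_injective _ hy
  rfl

lemma nodup_walkArcs_mainTrail {C : List (Fin n)} (hC : C.tail.Nodup) :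
    (walkArcs (mainTrail C)).Nodup := by
  cases C with
  | nil => simp [mainTrail]
  | cons c L =>
    refine nodup_walkArcs_cons (by simp) (nodup_walkArcs_cons (by simp) ?_)
    refine nodup_walkArcs_of_nodup_tail ?_
    simpa [List.nodup_append, List.nodup_map_iff fun _ _ => DTV.orig.inj] using hC

lemma nodup_walkArcs_of_nodup_walkArcs_mainTrail {C : List (Fin n)}
    (h : (walkArcs (mainTrail C)).Nodup) : (walkArcs C).Nodup := by
  have hinfix := walkArcs_infix_append [DTV.s, DTV.v] (C.map DTV.orig) [DTV.w, DTV.t]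
  rw [walkArcs_map] at hinfix
  exact (h.sublist hinfix.sublist).of_map _

lemma length_mainTrail (C : List (Fin n)) : (mainTrail C).length = C.length + 4 := by
  simp [mainTrail]

lemma length_trailFamily {C : List (Fin n)} (hC : C.length = n + 1) (i : Fin (n + 1)) :
    (trailFamily C i).length = i + 5 := by
  induction i using Fin.lastCases with
  | last => simp [trailFamily, length_mainTrail, hC]
  | cast c => simp [trailFamily, length_chainTrail]

lemma lane_of_mem_trailFamily {C : List (Fin n)} {i : Fin (n + 1)} {x : DTV n}
    (hx : x ∈ trailFamily C i) : lane x = none ∨ lane x = some i := by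
  induction i using Fin.lastCases with
  | last =>
    simp only [trailFamily, Fin.lastCases_last, mainTrail] at hx
    simp at hx
    rcases hx with rfl | rfl | ⟨_, _, rfl⟩ | rfl | rfl <;> simp [lane]
  | cast c =>
    simp only [trailFamily, Fin.lastCases_castSucc, chainTrail] at hx
    simp [-List.ofFn_succ, List.mem_ofFn] at hx
    rcases hx with rfl | ⟨_, rfl⟩ | rfl | rfl <;> simp [lane]

end Construction

section Forward

variable {n : ℕ} {A : Fin n → Fin n → Prop} {x₀ : Fin n} {C : List (Fin n)}

lemma isChain_trailFamily (hC : C.IsChain A) (hhead : C.head? = some x₀)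
    (hlast : C.getLast? = some x₀) (i : Fin (n + 1)) :
    (trailFamily C i).IsChain (DTArc A x₀) := by
  induction i using Fin.lastCases with
  | last => simpa [trailFamily] using isChain_mainTrail hC hhead hlast
  | cast c => simpa [trailFamily] using isChain_chainTrail c

lemma trailFamily_isTrail (hC : C.IsChain A) (hhead : C.head? = some x₀)
    (hlast : C.getLast? = some x₀) (htail : C.tail.Nodup) (i : Fin (n + 1)) :
    IsDiWalk (DTArc A x₀) (trailFamily C i) ∧ (walkArcs (trailFamily C i)).Nodup ∧
      (trailFamily C i).head? = some .s ∧ (trailFamily C i).getLast? = some .t := by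
  induction i using Fin.lastCases with
  | last =>
    simp only [trailFamily, Fin.lastCases_last]
    exact ⟨⟨by simp [mainTrail], isChain_mainTrail hC hhead hlast⟩,
      nodup_walkArcs_mainTrail htail, rfl, List.getLast?_eq_some_iff.2
        ⟨DTV.s :: DTV.v :: C.map DTV.orig ++ [DTV.w], by simp [mainTrail]⟩⟩
  | cast c =>
    simp only [trailFamily, Fin.lastCases_castSucc]
    exact ⟨⟨by simp [chainTrail], isChain_chainTrail c⟩,
      nodup_walkArcs_of_nodup_tail ((nodup_chainTrail c).sublist (List.tail_sublist _)), rfl,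
      List.getLast?_eq_some_iff.2
        ⟨DTV.s :: List.ofFn (DTV.ch c) ++ [DTV.w], by simp [chainTrail, -List.ofFn_succ]⟩⟩

lemma not_sharedArc_trailFamily (hC : C.IsChain A) (hhead : C.head? = some x₀)
    (hlast : C.getLast? = some x₀) (hlen : C.length = n + 1) (e : DTV n × DTV n) :
    ¬ SharedArc (trailFamily C) e := by
  obtain ⟨a, b⟩ := e
  rintro ⟨i, j, hij, r, hi, hj⟩
  have hlane : ∀ x ∈ trailFamily C i, x ∈ trailFamily C j → lane x = none := by
    intro x hxi hxj
    rcases lane_of_mem_trailFamily hxi with h | h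
    · exact h
    rcases lane_of_mem_trailFamily hxj with h' | h'
    · exact h'
    exact absurd (Option.some_injective _ (h.symm.trans h')) hij
  have hmi := mem_of_mem_walkArcs (List.mem_of_getElem? hi)
  have hmj := mem_of_mem_walkArcs (List.mem_of_getElem? hj)
  have hchain := isChain_trailFamily hC hhead hlast
  obtain rfl : b = .t := eq_t_of_dtArc_of_lane_eq_none
    (rel_of_mem_walkArcs (hchain i) (List.mem_of_getElem? hi))
    (hlane a hmi.1 hmj.1) (hlane b hmi.2 hmj.2)
  have hpos : ∀ k, (walkArcs (trailFamily C k))[r]? = some (a, .t) → r + 2 = k + 5 :=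
    fun k hk => length_trailFamily hlen k ▸
      succ_eq_length_of_getElem?_eq_sink (hchain k) not_dtArc_t (getElem?_walkArcs_eq_some.1 hk).2
  exact hij (Fin.ext (by have := hpos i hi; have := hpos j hj; omega))

end Forward

section Backward

variable {n : ℕ} {A : Fin n → Fin n → Prop} {x₀ : Fin n}

lemma eq_t_of_isChain_w_cons {l : List (DTV n)} (hl : (.w :: l).IsChain (DTArc A x₀))
    (ht : (.w :: l).getLast? = some .t) : l = [.t] := by
  rcases l with _ | ⟨b, l⟩
  · simp at ht
  rw [List.isChain_cons_cons] at hl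
  obtain rfl : b = .t := by cases b <;> simp_all [DTArc]
  rcases l with _ | ⟨c, l⟩
  · rfl
  · exact absurd (List.isChain_cons_cons.1 hl.2).1 (not_dtArc_t c)

lemma exists_eq_map_orig_of_isChain_orig_cons {a : Fin n} {l : List (DTV n)}
    (hl : (.orig a :: l).IsChain (DTArc A x₀)) (ht : (.orig a :: l).getLast? = some .t) :
    ∃ L : List (Fin n), (a :: L).IsChain A ∧ (a :: L).getLast? = some x₀ ∧
      .orig a :: l = (a :: L).map .orig ++ [.w, .t] := by
  induction l generalizing a with
  | nil => simp at ht
  | cons b l ih =>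
    rw [List.isChain_cons_cons] at hl
    rw [List.getLast?_cons_cons] at ht
    cases b with
    | orig a' =>
      obtain ⟨L, hL, hlast, heq⟩ := ih hl.2 ht
      exact ⟨a' :: L, List.isChain_cons_cons.2 ⟨hl.1, hL⟩, by rwa [List.getLast?_cons_cons],
        by rw [heq]; rfl⟩
    | w =>
      obtain rfl : a = x₀ := hl.1
      exact ⟨[], List.isChain_singleton _, rfl, by rw [eq_t_of_isChain_w_cons hl.2 ht]; rfl⟩
    | _ => exact hl.1.elim

lemma length_of_isChain_ch_cons {c : Fin n} {r : Fin (c + 2)} {l : List (DTV n)}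
    (hl : (.ch c r :: l).IsChain (DTArc A x₀)) (ht : (.ch c r :: l).getLast? = some .t) :
    l.length + r = c + 3 := by
  induction l generalizing r with
  | nil => simp at ht
  | cons b l ih =>
    rw [List.isChain_cons_cons] at hl
    rw [List.getLast?_cons_cons] at ht
    cases b with
    | ch c' r' =>
      obtain ⟨hc, hr⟩ := hl.1
      obtain rfl : c' = c := Fin.ext hc.symm
      have := ih hl.2 ht
      simp only [List.length_cons]
      omega
    | w =>
      have hr : (r : ℕ) + 1 = c + 2 := hl.1
      rw [eq_t_of_isChain_w_cons hl.2 ht]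
      simp only [List.length_cons, List.length_nil]
      omega
    | _ => exact hl.1.elim

lemma exists_eq_mainTrail_of_isChain_s_v {l : List (DTV n)}
    (hl : (.s :: .v :: l).IsChain (DTArc A x₀)) (ht : (.s :: .v :: l).getLast? = some .t) :
    ∃ C : List (Fin n), C.IsChain A ∧ C.head? = some x₀ ∧ C.getLast? = some x₀ ∧
      .s :: .v :: l = mainTrail C := by
  rcases l with _ | ⟨b, l⟩
  · simp at ht
  rw [List.isChain_cons_cons, List.isChain_cons_cons] at hl
  rw [List.getLast?_cons_cons, List.getLast?_cons_cons] at ht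
  cases b with
  | orig a =>
    obtain rfl : a = x₀ := hl.2.1
    obtain ⟨L, hL, hlast, heq⟩ := exists_eq_map_orig_of_isChain_orig_cons hl.2.2 ht
    exact ⟨a :: L, hL, rfl, hlast, by rw [heq]; rfl⟩
  | _ => exact hl.2.1.elim

lemma length_of_isChain_s_ch {c : Fin n} {l : List (DTV n)}
    (hl : (.s :: .ch c ⟨0, by omega⟩ :: l).IsChain (DTArc A x₀))
    (ht : (.s :: .ch c ⟨0, by omega⟩ :: l).getLast? = some .t) :
    (.s :: .ch c ⟨0, by omega⟩ :: l).length = c + 5 := by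
  rw [List.getLast?_cons_cons] at ht
  have := length_of_isChain_ch_cons (List.isChain_cons_cons.1 hl).2 ht
  simp only [List.length_cons, add_zero] at this ⊢
  omega

lemma exists_eq_append_w_t {l : List (DTV n)} (hl : l.IsChain (DTArc A x₀))
    (hs : l.head? = some .s) (ht : l.getLast? = some .t) : ∃ P, l = P ++ [.w, .t] := by
  obtain ⟨l', rfl⟩ := List.getLast?_eq_some_iff.1 ht
  rcases l'.eq_nil_or_concat' with rfl | ⟨P, q, rfl⟩
  · simp at hs
  have hq : DTArc A x₀ q .t :=
    (List.isChain_append.1 hl).2.2 q (by simp) .t (by simp)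
  obtain rfl : q = .w := by cases q <;> simp_all [DTArc]
  exact ⟨P, by simp⟩

/-- Pigeonhole: `s` has only `n + 1` out-neighbours. -/
lemma exists_eq_of_injective_of_dtArc_s {y : Fin (n + 1) → DTV n}
    (hy : Function.Injective y) (hs : ∀ i, DTArc A x₀ .s (y i)) {z : DTV n}
    (hz : DTArc A x₀ .s z) : ∃ i, y i = z := by
  classical
  let S : Finset (DTV n) := insert .v (Finset.univ.image fun c : Fin n => .ch c ⟨0, by omega⟩)
  have hmem : ∀ z, DTArc A x₀ .s z → z ∈ S := by
    intro z hz
    rcases dtArc_s_iff.1 hz with rfl | ⟨c, rfl⟩ <;> simp [S]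
  have himage : Finset.univ.image y = S := by
    refine Finset.eq_of_subset_of_card_le (fun z hz => ?_) ?_
    · obtain ⟨i, -, rfl⟩ := Finset.mem_image.1 hz
      exact hmem _ (hs i)
    · have hchains := Finset.card_image_le (s := Finset.univ)
        (f := fun c : Fin n => (DTV.ch c ⟨0, by omega⟩ : DTV n))
      have hS : S.card ≤ _ + 1 := Finset.card_insert_le _ _
      rw [Finset.card_image_of_injective _ hy, Finset.card_univ, Fintype.card_fin]
      rw [Finset.card_univ, Fintype.card_fin] at hchains
      omega
  simpa [← himage] using hmem z hz

end Backward

section Assembly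

variable {n : ℕ} {A : Fin n → Fin n → Prop} {x₀ : Fin n}

lemma exists_trails_of_hasDiHamCycle (h : HasDiHamCycle A) :
    ∃ W : Fin (n + 1) → List (DTV n),
      (∀ i : Fin (n + 1), IsDiWalk (DTArc A x₀) (W i) ∧ (walkArcs (W i)).Nodup ∧
        (W i).head? = some DTV.s ∧ (W i).getLast? = some DTV.t) ∧
      ∀ a : DTV n × DTV n, ¬ SharedArc W a := by
  classical
  obtain ⟨l, hl, hclosed, hlen, htail⟩ := h
  have hx : x₀ ∈ l.tail := by
    have huniv : l.tail.toFinset = Finset.univ := Finset.eq_univ_of_card _ (by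
      rw [List.toFinset_card_of_nodup htail, List.length_tail, hlen, Fintype.card_fin]; rfl)
    simp [← List.mem_toFinset, huniv]
  obtain ⟨C, hC, hhead, hlast, hClen, hperm⟩ := exists_rotation_of_closed_walk hl hclosed hx
  exact ⟨trailFamily C, trailFamily_isTrail hC hhead hlast (hperm.nodup_iff.2 htail),
    not_sharedArc_trailFamily hC hhead hlast (hClen.trans hlen)⟩

lemma length_injective_of_not_sharedArc {W : Fin (n + 1) → List (DTV n)}
    (hW : ∀ i, (W i).IsChain (DTArc A x₀) ∧ (W i).head? = some .s ∧ (W i).getLast? = some .t)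
    (hsh : ∀ e, ¬ SharedArc W e) : Function.Injective fun i => (W i).length := by
  intro i j hij
  by_contra hne
  obtain ⟨P, hP⟩ := exists_eq_append_w_t (hW i).1 (hW i).2.1 (hW i).2.2
  obtain ⟨Q, hQ⟩ := exists_eq_append_w_t (hW j).1 (hW j).2.1 (hW j).2.2
  have hPQ : P.length = Q.length := by simpa [hP, hQ] using hij
  refine hsh (.w, .t) ⟨i, j, hne, P.length, ?_, ?_⟩
  · rw [hP]; exact getElem?_walkArcs_append_pair P _ _
  · rw [hQ, hPQ]; exact getElem?_walkArcs_append_pair Q _ _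

lemma exists_closed_trail_of_trails {W : Fin (n + 1) → List (DTV n)}
    (hW : ∀ i : Fin (n + 1), IsDiWalk (DTArc A x₀) (W i) ∧ (walkArcs (W i)).Nodup ∧
        (W i).head? = some DTV.s ∧ (W i).getLast? = some DTV.t)
    (hsh : ∀ a : DTV n × DTV n, ¬ SharedArc W a) :
    ∃ C : List (Fin n), C.IsChain A ∧ C.head? = some x₀ ∧ C.getLast? = some x₀ ∧
      (walkArcs C).Nodup ∧ n + 1 ≤ C.length := by
  have hchain : ∀ i, (W i).IsChain (DTArc A x₀) := fun i => (hW i).1.2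
  choose y l hWy using fun i =>
    exists_eq_cons_cons_of_head?_of_getLast? (hW i).2.2.1 (hW i).2.2.2 (by simp)
  have hsy : ∀ i, DTArc A x₀ .s (y i) := fun i => by
    have := hchain i
    rw [hWy i, List.isChain_cons_cons] at this
    exact this.1
  have hy : Function.Injective y := fun i j hij => by
    by_contra hne
    exact hsh (.s, y i) ⟨i, j, hne, 0, by rw [hWy i]; rfl, by rw [hWy j, hij]; rfl⟩
  have hlen := length_injective_of_not_sharedArc (fun i => ⟨hchain i, (hW i).2.2⟩) hsh
  obtain ⟨i₀, hi₀⟩ := exists_eq_of_injective_of_dtArc_s hy hsy (z := .v) trivial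
  have hmain := hchain i₀
  have hlast := (hW i₀).2.2.2
  rw [hWy i₀, hi₀] at hmain hlast
  obtain ⟨C, hC, hChead, hClast, hCeq⟩ := exists_eq_mainTrail_of_isChain_s_v hmain hlast
  have hWi₀ : W i₀ = mainTrail C := by rw [hWy i₀, hi₀, hCeq]
  refine ⟨C, hC, hChead, hClast,
    nodup_walkArcs_of_nodup_walkArcs_mainTrail (hWi₀ ▸ (hW i₀).2.1), ?_⟩
  have hCpos : 0 < C.length := List.length_pos_iff.2 (by rintro rfl; simp at hChead)
  by_contra hlt
  obtain ⟨i, hi⟩ := exists_eq_of_injective_of_dtArc_s hy hsy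
    (z := .ch ⟨C.length - 1, by omega⟩ ⟨0, by omega⟩) rfl
  have hchi := hchain i
  have hlasti := (hW i).2.2.2
  rw [hWy i, hi] at hchi hlasti
  have hWi : (W i).length = (W i₀).length := by
    rw [hWi₀, length_mainTrail, hWy i, hi, length_of_isChain_s_ch hchi hlasti, Fin.val_mk]
    omega
  have := congrArg y (hlen hWi)
  rw [hi, hi₀] at this
  cases this

lemma hasDiHamCycle_of_trails (hdeg : ∀ u, {z | A u z}.ncard + {z | A z u}.ncard ≤ 3)
    {W : Fin (n + 1) → List (DTV n)}
    (hW : ∀ i : Fin (n + 1), IsDiWalk (DTArc A x₀) (W i) ∧ (walkArcs (W i)).Nodup ∧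
        (W i).head? = some DTV.s ∧ (W i).getLast? = some DTV.t)
    (hsh : ∀ a : DTV n × DTV n, ¬ SharedArc W a) : HasDiHamCycle A := by
  obtain ⟨C, hC, hhead, hlast, htrail, hlen⟩ := exists_closed_trail_of_trails hW hsh
  have htail := nodup_tail_of_closed_trail hdeg hC (hhead.trans hlast.symm) htrail
  refine ⟨C, hC, hhead.trans hlast.symm, ?_, htail⟩
  have := htail.length_le_card
  simp only [List.length_tail, Fintype.card_fin] at this
  omega

end Assembly

/-- Let `G` be a digraph on `n` vertices in which every vertex `u`
satisfies `max(outdeg u, indeg u) ≤ 2` and `outdeg u + indeg u ≤ 3`, and fix a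
vertex `x₀` of `G`. Then `G` has a directed Hamiltonian cycle iff the digraph `G'`
of the directed trail construction admits `n + 1` `s`-`t` trails sharing no arc. -/
theorem stmt10 (n : ℕ) (A : Fin n → Fin n → Prop)
    (hdeg : ∀ u : Fin n, {z : Fin n | A u z}.ncard ≤ 2 ∧
      {z : Fin n | A z u}.ncard ≤ 2 ∧
      {z : Fin n | A u z}.ncard + {z : Fin n | A z u}.ncard ≤ 3)
    (x₀ : Fin n) :
    HasDiHamCycle A ↔
    (∃ W : Fin (n + 1) → List (DTV n),
      (∀ i : Fin (n + 1), IsDiWalk (DTArc A x₀) (W i) ∧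
        (walkArcs (W i)).Nodup ∧
        (W i).head? = some DTV.s ∧ (W i).getLast? = some DTV.t) ∧
      ∀ a : DTV n × DTV n, ¬ SharedArc W a) :=
  ⟨exists_trails_of_hasDiHamCycle, fun ⟨_, hW, hsh⟩ =>
    hasDiHamCycle_of_trails (fun u => (hdeg u).2.2) hW hsh⟩

end PaperRCA
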